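/- Every recognizable trace language is fnf-automatic, but there is an fnf-automatic trace language that is not recognizable: for independent letters a, b and A = {a,b}, the language L = {[A]^n | n ∈ ℕ} = {[a^n b^n] | n ∈ ℕ} is fnf-automatic but not recognizable. -/

import Mathlib

def Indep {α : Type*} (D : α → α → Prop) (a b : α) : Prop := a ≠ b ∧ ¬ D a b

/-- The trace congruence: least monoid congruence with `ab ∼ ba` for independent `(a,b)`. -/
def traceCon {α : Type*} (D : α → α → Prop) : Con (FreeMonoid α) :=
  conGen (fun u v => ∃ a b, Indep D a b ∧
    u = FreeMonoid.of a * FreeMonoid.of b ∧ v = FreeMonoid.of b * FreeMonoid.of a)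

/-- A finite set of letters is independent if its distinct elements are pairwise
independent. -/
def IndepSet {α : Type*} (D : α → α → Prop) (A : Finset α) : Prop :=
  ∀ a ∈ A, ∀ b ∈ A, a ≠ b → Indep D a b

/-- `D(A)`: the set of letters dependent on some letter of `A`. -/
def DepSet {α : Type*} (D : α → α → Prop) (A : Finset α) : Set α :=
  {b | ∃ a ∈ A, D a b}

/-- A word over the alphabet of (independent) subsets of `Σ` is in extended Foata
normal form if each letter is contained in `D` of its predecessor. -/
def eFNF {α : Type*} (D : α → α → Prop) (W : List (Finset α)) : Prop :=
  W.Chain' (fun A B => ↑B ⊆ DepSet D A)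

/-- The trace induced by a word over subsets of `Σ` (the homomorphism `[·] : F* → M`). -/
noncomputable def traceOf {α : Type*} (D : α → α → Prop) (W : List (Finset α)) :
    (traceCon D).Quotient :=
  (traceCon D).mk' (FreeMonoid.ofList (W.flatMap Finset.toList))

/-- The convolution language `L_R ⊆ (F^k)*` of a `k`-ary trace relation `R`: the words
over `F^k` all of whose component words are in extended Foata normal form (over
independent sets) and represent a tuple of traces belonging to `R`. -/
def LRel {α : Type*} (D : α → α → Prop) {k : ℕ}
    (R : Set (Fin k → (traceCon D).Quotient)) : Language (Fin k → Finset α) :=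
  {W | (∀ i : Fin k, (∀ A ∈ W.map (fun f => f i), IndepSet D A) ∧
          eFNF D (W.map (fun f => f i))) ∧
    (fun i => traceOf D (W.map (fun f => f i))) ∈ R}

/-- A `k`-ary trace relation is fnf-automatic if its convolution language is regular. -/
def FnfAutomatic {α : Type*} (D : α → α → Prop) {k : ℕ}
    (R : Set (Fin k → (traceCon D).Quotient)) : Prop :=
  (LRel D R).IsRegular

/-- The language of extended Foata normal forms of elements of a trace language. -/
def LLang {α : Type*} (D : α → α → Prop) (L : Set (traceCon D).Quotient) :
    Language (Finset α) :=
  {W | (∀ A ∈ W, IndepSet D A) ∧ eFNF D W ∧ traceOf D W ∈ L}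

/-- A trace language is fnf-automatic if its language of extended Foata normal forms
is regular. -/
def FnfAutomaticLang {α : Type*} (D : α → α → Prop)
    (L : Set (traceCon D).Quotient) : Prop :=
  (LLang D L).IsRegular
/-- A trace language is recognizable if the set of words inducing its traces is a
regular word language. -/
def RecognizableLang {α : Type*} (D : α → α → Prop)
    (L : Set (traceCon D).Quotient) : Prop :=
  Language.IsRegular {w : List α | (traceCon D).mk' (FreeMonoid.ofList w) ∈ L}

section Cnt
variable {α : Type*} (D : α → α → Prop)

noncomputable def cntHom : (traceCon D).Quotient →* Multiplicative (Multiset α) :=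
  Con.lift _ (FreeMonoid.lift (fun x => Multiplicative.ofAdd ({x} : Multiset α))) (by
    apply Con.conGen_le.mpr
    rintro u v ⟨x, y, _, rfl, rfl⟩
    show _ = _
    exact mul_comm _ _)

lemma cntHom_mk (w : List α) :
    cntHom D ((traceCon D).mk' (FreeMonoid.ofList w)) = Multiplicative.ofAdd (w : Multiset α) := by
  induction w with
  | nil => rfl
  | cons x w ih =>
    have : FreeMonoid.ofList (x :: w) = FreeMonoid.of x * FreeMonoid.ofList w := rfl
    rw [this, map_mul, map_mul, ih]
    rfl
end Cnt

section Trace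
variable {α : Type*} [DecidableEq α] {D : α → α → Prop}
set_option linter.unusedSectionVars false

lemma trace_swap {x y : α} (h : Indep D x y) :
    traceCon D (FreeMonoid.of x * FreeMonoid.of y) (FreeMonoid.of y * FreeMonoid.of x) :=
  ConGen.Rel.of _ _ ⟨x, y, h, rfl, rfl⟩

lemma indep_symm (hsymm : ∀ a b, D a b → D b a) {x y : α} (h : Indep D x y) : Indep D y x :=
  ⟨h.1.symm, fun hd => h.2 (hsymm _ _ hd)⟩

/-- `y` commutes past a power of `x` when independent. -/
lemma trace_comm_pow (hsymm : ∀ a b, D a b → D b a) {x y : α} (h : Indep D x y) (n : ℕ) :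
    traceCon D (FreeMonoid.of y * (FreeMonoid.of x) ^ n) ((FreeMonoid.of x) ^ n * FreeMonoid.of y) := by
  induction n with
  | zero => simp; exact (traceCon D).refl _
  | succ n ih =>
    have h1 : traceCon D (FreeMonoid.of y * (FreeMonoid.of x) ^ (n+1))
        (FreeMonoid.of x * (FreeMonoid.of y * (FreeMonoid.of x) ^ n)) := by
      have := (traceCon D).mul (trace_swap (indep_symm hsymm h)) ((traceCon D).refl ((FreeMonoid.of x) ^ n))
      rw [pow_succ'] at *
      simpa [mul_assoc] using this
    have h2 := (traceCon D).mul ((traceCon D).refl (FreeMonoid.of x)) ih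
    have := (traceCon D).trans h1 h2
    rw [pow_succ'] at *
    simpa [mul_assoc] using this

/-- Any word over `{a, b}` with independent `a, b` is congruent to `a^i b^j`. -/
lemma trace_normal (hsymm : ∀ a b, D a b → D b a) {a b : α} (hab : Indep D a b) :
    ∀ w : List α, (∀ x ∈ w, x = a ∨ x = b) →
      traceCon D (FreeMonoid.ofList w)
        ((FreeMonoid.of a) ^ (w.count a) * (FreeMonoid.of b) ^ (w.count b)) := by
  intro w hw
  induction w with
  | nil => simpa using (traceCon D).refl 1
  | cons x w ih =>
    have hx := hw x (List.mem_cons_self)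
    have ihw := ih (fun y hy => hw y (List.mem_cons_of_mem _ hy))
    have hcons : FreeMonoid.ofList (x :: w) = FreeMonoid.of x * FreeMonoid.ofList w := rfl
    have hmul := (traceCon D).mul ((traceCon D).refl (FreeMonoid.of x)) ihw
    rw [← hcons] at hmul
    rcases hx with rfl | rfl
    · refine (traceCon D).trans hmul ?_
      have hne : x ≠ b := hab.1
      rw [List.count_cons_self, List.count_cons_of_ne hab.1]
      rw [pow_succ', mul_assoc]
      exact (traceCon D).refl _
    · refine (traceCon D).trans hmul ?_
      have := trace_comm_pow hsymm hab (w.count a)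
      have h2 := (traceCon D).mul this ((traceCon D).refl ((FreeMonoid.of x) ^ (w.count x)))
      rw [List.count_cons_self, List.count_cons_of_ne hab.1.symm]
      refine (traceCon D).trans (by simpa [mul_assoc] using h2) ?_
      rw [pow_succ']
      exact (traceCon D).refl _
end Trace

section L0
variable {α : Type*} [DecidableEq α] {D : α → α → Prop}
set_option linter.unusedSectionVars false

lemma traceCon_mk_eq_iff {x y : FreeMonoid α} :
    (traceCon D).mk' x = (traceCon D).mk' y ↔ traceCon D x y := Con.eq _

lemma multiset_eq_of_mk_eq {w v : List α}
    (h : (traceCon D).mk' (FreeMonoid.ofList w) = (traceCon D).mk' (FreeMonoid.ofList v)) :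
    (w : Multiset α) = (v : Multiset α) := by
  have := congrArg (cntHom D) h
  rw [cntHom_mk, cntHom_mk] at this
  exact Multiplicative.ofAdd.injective this

lemma ofList_replicate (x : α) (n : ℕ) :
    FreeMonoid.ofList (List.replicate n x) = (FreeMonoid.of x) ^ n := by
  induction n with
  | zero => rfl
  | succ n ih =>
    rw [List.replicate_succ, pow_succ']
    rw [← ih]
    rfl

lemma trace_ab_pow (hsymm : ∀ a b, D a b → D b a) {a b : α} (hab : Indep D a b) (n : ℕ) :
    traceCon D ((FreeMonoid.of a * FreeMonoid.of b) ^ n)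
      ((FreeMonoid.of a) ^ n * (FreeMonoid.of b) ^ n) := by
  induction n with
  | zero => simpa using (traceCon D).refl 1
  | succ n ih =>
    have h1 := (traceCon D).mul ih ((traceCon D).refl (FreeMonoid.of a * FreeMonoid.of b))
    rw [← pow_succ] at h1
    refine (traceCon D).trans h1 ?_
    have h2 := ((traceCon D).symm (trace_comm_pow hsymm (indep_symm hsymm hab) n) :
      traceCon D ((FreeMonoid.of b) ^ n * FreeMonoid.of a) (FreeMonoid.of a * (FreeMonoid.of b) ^ n))
    have h3 := (traceCon D).mul ((traceCon D).mul ((traceCon D).refl ((FreeMonoid.of a) ^ n)) h2)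
      ((traceCon D).refl (FreeMonoid.of b))
    refine (traceCon D).trans (by simpa [mul_assoc] using h3) ?_
    rw [pow_succ (FreeMonoid.of a), pow_succ (FreeMonoid.of b)]
    simpa [mul_assoc] using (traceCon D).refl _
end L0

section L0b
variable {α : Type*} [DecidableEq α] {D : α → α → Prop}
set_option linter.unusedSectionVars false

lemma mem_pair_toList {a b x : α} : x ∈ ({a, b} : Finset α).toList ↔ x = a ∨ x = b := by
  rw [Finset.mem_toList]; simp

lemma count_pair_toList_left {a b : α} :
    (({a, b} : Finset α).toList).count a = 1 :=
  List.count_eq_one_of_mem (Finset.nodup_toList _) (by rw [Finset.mem_toList]; simp)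

lemma count_pair_toList_right {a b : α} :
    (({a, b} : Finset α).toList).count b = 1 :=
  List.count_eq_one_of_mem (Finset.nodup_toList _) (by rw [Finset.mem_toList]; simp)

lemma traceOf_pair (hsymm : ∀ a b, D a b → D b a) {a b : α} (hab : Indep D a b) :
    traceOf D [({a, b} : Finset α)] =
      (traceCon D).mk' (FreeMonoid.of a * FreeMonoid.of b) := by
  rw [traceOf]
  have hflat : ([({a, b} : Finset α)].flatMap Finset.toList) = ({a, b} : Finset α).toList := by
    simp
  rw [hflat, traceCon_mk_eq_iff]
  have := trace_normal hsymm hab (({a, b} : Finset α).toList) (fun x hx => mem_pair_toList.mp hx)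
  rw [count_pair_toList_left, count_pair_toList_right] at this
  simpa using this

lemma traceOf_pair_pow (hsymm : ∀ a b, D a b → D b a) {a b : α} (hab : Indep D a b) (n : ℕ) :
    (traceOf D [({a, b} : Finset α)]) ^ n =
      (traceCon D).mk' (FreeMonoid.ofList (List.replicate n a ++ List.replicate n b)) := by
  rw [traceOf_pair hsymm hab, ← map_pow, traceCon_mk_eq_iff]
  have h := trace_ab_pow hsymm hab n
  have : FreeMonoid.ofList (List.replicate n a ++ List.replicate n b)
      = (FreeMonoid.of a) ^ n * (FreeMonoid.of b) ^ n := by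
    rw [← ofList_replicate, ← ofList_replicate]; rfl
  rw [this]; exact h

/-- Characterization of membership in `L₀`. -/
lemma mem_L0_iff (hsymm : ∀ a b, D a b → D b a) {a b : α} (hab : Indep D a b) (w : List α) :
    ((traceCon D).mk' (FreeMonoid.ofList w) ∈
      {x : (traceCon D).Quotient | ∃ n : ℕ, x = (traceOf D [({a, b} : Finset α)]) ^ n}) ↔
    ((∀ x ∈ w, x = a ∨ x = b) ∧ w.count a = w.count b) := by
  constructor
  · rintro ⟨n, hn⟩
    rw [traceOf_pair_pow hsymm hab] at hn
    have hms := multiset_eq_of_mk_eq hn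
    have hcw : ∀ x, w.count x = (List.replicate n a ++ List.replicate n b).count x := by
      intro x
      have := congrArg (Multiset.count x) hms
      simpa using this
    constructor
    · intro x hx
      have : (0:ℕ) < w.count x := List.count_pos_iff.mpr hx
      rw [hcw x] at this
      by_contra hcon
      push_neg at hcon
      simp [List.count_append, List.count_replicate, Ne.symm hcon.1, Ne.symm hcon.2] at this
    · rw [hcw a, hcw b]
      simp [List.count_append, List.count_replicate, hab.1, hab.1.symm]
  · rintro ⟨hw, hc⟩
    refine ⟨w.count a, ?_⟩
    rw [traceOf_pair_pow hsymm hab, traceCon_mk_eq_iff]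
    have := trace_normal hsymm hab w hw
    have heq : FreeMonoid.ofList (List.replicate (w.count a) a ++ List.replicate (w.count a) b)
        = (FreeMonoid.of a) ^ (w.count a) * (FreeMonoid.of b) ^ (w.count a) := by
      rw [← ofList_replicate, ← ofList_replicate]; rfl
    rw [heq, ← hc] at *
    exact this
end L0b

section NotRec
variable {α : Type*} [DecidableEq α] {D : α → α → Prop}
set_option linter.unusedSectionVars false

lemma not_recognizable_L0 (hsymm : ∀ a b, D a b → D b a) {a b : α} (hab : Indep D a b) :
    ¬ Language.IsRegular {w : List α | (traceCon D).mk' (FreeMonoid.ofList w) ∈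
      {x : (traceCon D).Quotient | ∃ n : ℕ, x = (traceOf D [({a, b} : Finset α)]) ^ n}} := by
  rintro ⟨σ, fin, M, hM⟩
  obtain ⟨p, hp⟩ : ∃ p, p = Fintype.card σ := ⟨_, rfl⟩
  obtain ⟨x, hx⟩ : ∃ x, x = List.replicate p a ++ List.replicate p b := ⟨_, rfl⟩
  have hxmem : x ∈ M.accepts := by
    rw [hM]
    change (traceCon D).mk' (FreeMonoid.ofList x) ∈ {x : (traceCon D).Quotient | ∃ n : ℕ, x = (traceOf D [({a, b} : Finset α)]) ^ n}
    rw [mem_L0_iff hsymm hab]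
    constructor
    · intro y hy
      rw [hx] at hy
      rcases List.mem_append.mp hy with h | h
      · exact Or.inl (List.eq_of_mem_replicate h)
      · exact Or.inr (List.eq_of_mem_replicate h)
    · rw [hx]
      simp [List.count_append, List.count_replicate, hab.1, hab.1.symm]
  have hlen : Fintype.card σ ≤ x.length := by
    rw [hx, List.length_append, List.length_replicate, List.length_replicate, ← hp]
    omega
  obtain ⟨u, v, w, hdec, hluv, hvne, hpump⟩ := M.pumping_lemma hxmem hlen
  rw [← hp] at hluv
  -- v consists only of a's
  have hva : ∀ y ∈ v, y = a := by
    intro y hy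
    have h1 : u ++ v = x.take (u.length + v.length) := by
      rw [hdec, show u.length + v.length = (u ++ v).length by simp, List.take_left]
    have h2 : x.take (u.length + v.length) = List.replicate (u.length + v.length) a := by
      rw [hx, List.take_append_of_le_length (by simpa using hluv), List.take_replicate]
      congr 1
      omega
    have : y ∈ List.replicate (u.length + v.length) a := by
      rw [← h2, ← h1]; exact List.mem_append_right u hy
    exact List.eq_of_mem_replicate this
  -- the pumped word is accepted
  have hpmem : u ++ (v ++ v) ++ w ∈ M.accepts := by
    apply hpump
    refine Language.mem_mul.mpr ⟨u ++ (v ++ v), Language.mem_mul.mpr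
      ⟨u, rfl, v ++ v, ?_, rfl⟩, w, rfl, rfl⟩
    rw [Language.mem_kstar]
    refine ⟨[v, v], by simp, ?_⟩
    intro z hz
    rcases List.mem_cons.mp hz with rfl | hz
    · exact Set.mem_singleton _
    · rcases List.mem_cons.mp hz with rfl | hz
      · exact Set.mem_singleton _
      · simp at hz
  rw [hM] at hpmem
  change (traceCon D).mk' (FreeMonoid.ofList (u ++ (v ++ v) ++ w)) ∈ {x : (traceCon D).Quotient | ∃ n : ℕ, x = (traceOf D [({a, b} : Finset α)]) ^ n} at hpmem
  rw [mem_L0_iff hsymm hab] at hpmem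
  have hcv_a : v.count a = v.length := List.count_eq_length.mpr (fun y hy => (hva y hy).symm)
  have hcv_b : v.count b = 0 := List.count_eq_zero.mpr (fun hbv => hab.1 ((hva b hbv).symm))
  have hcx_a : x.count a = p := by
    rw [hx]; simp [List.count_append, List.count_replicate, hab.1.symm]
  have hcx_b : x.count b = p := by
    rw [hx]; simp [List.count_append, List.count_replicate, hab.1]
  have hxa : x.count a = u.count a + v.count a + w.count a := by
    rw [hdec]; simp only [List.count_append]
  have hxb : x.count b = u.count b + v.count b + w.count b := by
    rw [hdec]; simp only [List.count_append]
  have hc := hpmem.2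
  simp only [List.count_append] at hc
  have hvl : 0 < v.length := List.length_pos_iff.mpr hvne
  omega
end NotRec

section Part2
variable {α : Type*} [DecidableEq α] {D : α → α → Prop}
set_option linter.unusedSectionVars false

lemma traceOf_append (V V' : List (Finset α)) :
    traceOf D (V ++ V') = traceOf D V * traceOf D V' := by
  unfold traceOf
  rw [List.flatMap_append, ← map_mul]
  rfl

lemma traceOf_rep_empty (m : ℕ) :
    traceOf D (List.replicate m (∅ : Finset α)) = 1 := by
  induction m with
  | zero => rfl
  | succ m ih =>
    rw [List.replicate_succ, show ((∅:Finset α) :: List.replicate m ∅) =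
      [(∅:Finset α)] ++ List.replicate m ∅ from rfl, traceOf_append, ih, mul_one]
    unfold traceOf
    simp

lemma traceOf_rep (A : Finset α) (n : ℕ) :
    traceOf D (List.replicate n A) = (traceOf D [A]) ^ n := by
  induction n with
  | zero => rfl
  | succ n ih =>
    rw [List.replicate_succ, show (A :: List.replicate n A) =
      [A] ++ List.replicate n A from rfl, traceOf_append, ih, pow_succ']

lemma chain_rep (hrefl : ∀ x, D x x) {a b : α} (n m : ℕ) :
    List.Chain' (fun A B => ↑B ⊆ DepSet D A)
      (List.replicate n ({a, b} : Finset α) ++ List.replicate m (∅ : Finset α)) := by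
  have hAA : ↑({a, b} : Finset α) ⊆ DepSet D ({a, b} : Finset α) := by
    intro x hx
    exact ⟨x, by simpa using hx, hrefl x⟩
  have hchain : ∀ (B : Finset α) (k : ℕ), ↑B ⊆ DepSet D B →
      List.Chain' (fun A B => ↑B ⊆ DepSet D A) (List.replicate k B) := by
    intro B k hB
    induction k with
    | zero => exact List.isChain_nil
    | succ k ih =>
      rw [List.replicate_succ]
      cases k with
      | zero => exact List.isChain_singleton _
      | succ k =>
        rw [List.replicate_succ]; simp only [List.Chain', List.isChain_cons_cons]
        rw [List.replicate_succ] at ih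
        exact ⟨hB, ih⟩
  refine List.IsChain.append (hchain _ _ hAA) (hchain _ _ (by simp)) ?_
  intro x _ y hy
  have : y = (∅ : Finset α) := by
    cases m with
    | zero => simp at hy
    | succ m => rw [List.replicate_succ] at hy; simp at hy; exact hy.symm
  rw [this]
  simp

lemma empty_tail {W : List (Finset α)} 
    (h : List.Chain' (fun A B => ↑B ⊆ DepSet D A) ((∅ : Finset α) :: W)) :
    ∀ B ∈ W, B = (∅ : Finset α) := by
  induction W with
  | nil => simp
  | cons B W ih =>
    simp only [List.Chain', List.isChain_cons_cons] at h
    have hB : B = (∅ : Finset α) := by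
      have := h.1
      rw [Finset.eq_empty_iff_forall_notMem]
      intro x hx
      rcases this hx with ⟨c, hc, _⟩
      simp at hc
    intro C hC
    rcases List.mem_cons.mp hC with rfl | hC
    · exact hB
    · exact ih (hB ▸ h.2) C hC

lemma only_a_tail {a b : α} (hab : Indep D a b) :
    ∀ (W : List (Finset α)) (P : Finset α), (∀ x ∈ P, x = a) →
      (∀ B ∈ W, ∀ x ∈ B, x = a ∨ x = b) →
      List.Chain' (fun A B => ↑B ⊆ DepSet D A) (P :: W) →
      ∀ B ∈ W, ∀ x ∈ B, x = a := by
  intro W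
  induction W with
  | nil => simp
  | cons B W ih =>
    intro P hP hlets hch
    simp only [List.Chain', List.isChain_cons_cons] at hch
    have hBa : ∀ x ∈ B, x = a := by
      intro x hx
      rcases hch.1 hx with ⟨c, hc, hdc⟩
      have hca := hP c hc
      subst hca
      rcases hlets B (List.mem_cons_self) x hx with rfl | rfl
      · rfl
      · exact absurd hdc hab.2
    intro C hC
    rcases List.mem_cons.mp hC with rfl | hC
    · exact hBa
    · exact ih B hBa (fun B' hB' => hlets B' (List.mem_cons_of_mem _ hB')) hch.2 C hC

lemma classify_subset {a b : α} (B : Finset α) (h : ∀ x ∈ B, x = a ∨ x = b) :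
    B = ∅ ∨ B = {a} ∨ B = {b} ∨ B = {a, b} := by
  by_cases ha : a ∈ B <;> by_cases hb : b ∈ B
  · right; right; right
    apply Finset.Subset.antisymm
    · intro x hx; rcases h x hx with h' | h' <;> simp [h']
    · intro x hx; simp at hx; rcases hx with rfl | rfl <;> assumption
  · right; left
    apply Finset.Subset.antisymm
    · intro x hx
      rcases h x hx with h' | h'
      · simp [h']
      · exact absurd (h' ▸ hx) hb
    · intro x hx; simp at hx; subst hx; exact ha
  · right; right; left
    apply Finset.Subset.antisymm
    · intro x hx
      rcases h x hx with h' | h'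
      · exact absurd (h' ▸ hx) ha
      · simp [h']
    · intro x hx; simp at hx; subst hx; exact hb
  · left
    rw [Finset.eq_empty_iff_forall_notMem]
    intro x hx
    rcases h x hx with h' | h'
    · exact ha (h' ▸ hx)
    · exact hb (h' ▸ hx)
end Part2

section Part2b
variable {α : Type*} [DecidableEq α] {D : α → α → Prop}
set_option linter.unusedSectionVars false

lemma struct_lemma (hsymm : ∀ x y, D x y → D y x) {a b : α} (hab : Indep D a b) :
    ∀ W : List (Finset α), (∀ B ∈ W, ∀ x ∈ B, x = a ∨ x = b) →
      List.Chain' (fun A B => ↑B ⊆ DepSet D A) W →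
      (W.flatMap Finset.toList).count a = (W.flatMap Finset.toList).count b →
      ∃ n m, W = List.replicate n ({a, b} : Finset α) ++ List.replicate m (∅ : Finset α) := by
  intro W
  induction W with
  | nil => exact fun _ _ _ => ⟨0, 0, rfl⟩
  | cons B W ih =>
    intro hlets hch hcnt
    have hBsub := hlets B (List.mem_cons_self)
    have htails : ∀ B' ∈ W, ∀ x ∈ B', x = a ∨ x = b :=
      fun B' hB' => hlets B' (List.mem_cons_of_mem _ hB')
    rcases classify_subset B hBsub with rfl | rfl | rfl | rfl
    · -- B = ∅ : the whole tail is ∅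
      have hall := empty_tail hch
      refine ⟨0, W.length + 1, ?_⟩
      simp only [List.replicate_succ, List.nil_append]
      rw [List.eq_replicate_iff.mpr ⟨rfl, hall⟩]
      simp
    · -- B = {a} : contradiction with counting
      exfalso
      have honly := only_a_tail hab W {a} (by simp) htails hch
      have hbz : (W.flatMap Finset.toList).count b = 0 := by
        rw [List.count_eq_zero]
        intro hbmem
        rcases List.mem_flatMap.mp hbmem with ⟨B', hB', hb'⟩
        exact hab.1 (honly B' hB' b (Finset.mem_toList.mp hb') ).symm
      have hbz2 : (({a} : Finset α).toList).count b = 0 := by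
        rw [List.count_eq_zero]
        intro hbmem
        have := Finset.mem_toList.mp hbmem
        simp at this
        exact hab.1 this.symm
      have haz : 0 < (({a} : Finset α).toList).count a := by
        apply List.count_pos_iff.mpr
        rw [Finset.mem_toList]; simp
      rw [List.flatMap_cons, List.count_append, List.count_append, hbz, hbz2] at hcnt
      omega
    · -- B = {b} : symmetric contradiction
      exfalso
      have honly := only_a_tail (indep_symm hsymm hab) W {b} (by simp) 
        (fun B' hB' x hx => (htails B' hB' x hx).symm) hch
      have haz : (W.flatMap Finset.toList).count a = 0 := by
        rw [List.count_eq_zero]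
        intro hamem
        rcases List.mem_flatMap.mp hamem with ⟨B', hB', ha'⟩
        exact hab.1 (honly B' hB' a (Finset.mem_toList.mp ha'))
      have haz2 : (({b} : Finset α).toList).count a = 0 := by
        rw [List.count_eq_zero]
        intro hamem
        have := Finset.mem_toList.mp hamem
        simp at this
        exact hab.1 this
      have hbz : 0 < (({b} : Finset α).toList).count b := by
        apply List.count_pos_iff.mpr
        rw [Finset.mem_toList]; simp
      rw [List.flatMap_cons, List.count_append, List.count_append, haz, haz2] at hcnt
      omega
    · -- B = {a, b}
      have hch' : List.Chain' (fun A B => ↑B ⊆ DepSet D A) W := hch.tail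
      have hcnt' : (W.flatMap Finset.toList).count a = (W.flatMap Finset.toList).count b := by
        rw [List.flatMap_cons, List.count_append, List.count_append,
          count_pair_toList_left, count_pair_toList_right] at hcnt
        omega
      obtain ⟨n, m, hW⟩ := ih htails hch' hcnt'
      exact ⟨n + 1, m, by rw [hW, List.replicate_succ]; rfl⟩

lemma LLang_L0_eq (hrefl : ∀ x, D x x) (hsymm : ∀ x y, D x y → D y x)
    {a b : α} (hab : Indep D a b) :
    LLang D {x : (traceCon D).Quotient | ∃ n : ℕ, x = (traceOf D [({a, b} : Finset α)]) ^ n}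
      = {W | ∃ n m, W = List.replicate n ({a, b} : Finset α) ++ List.replicate m (∅ : Finset α)} := by
  ext W
  constructor
  · rintro ⟨hind, hfnf, htr⟩
    have hmem := (mem_L0_iff hsymm hab (W.flatMap Finset.toList)).mp htr
    refine struct_lemma hsymm hab W ?_ hfnf hmem.2
    intro B hB x hx
    exact hmem.1 x (List.mem_flatMap.mpr ⟨B, hB, Finset.mem_toList.mpr hx⟩)
  · rintro ⟨n, m, rfl⟩
    refine ⟨?_, chain_rep hrefl n m, ?_⟩
    · intro A hA
      rcases List.mem_append.mp hA with h | h
      · rw [List.eq_of_mem_replicate h]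
        intro x hx y hy hxy
        simp at hx hy
        rcases hx with rfl | rfl <;> rcases hy with rfl | rfl
        · exact absurd rfl hxy
        · exact hab
        · exact indep_symm hsymm hab
        · exact absurd rfl hxy
      · rw [List.eq_of_mem_replicate h]
        intro x hx
        simp at hx
    · rw [traceOf_append, traceOf_rep, traceOf_rep_empty, mul_one]
      exact ⟨n, rfl⟩
end Part2b

section Dfa2
variable {α : Type*} [DecidableEq α]

def dfa2 (a b : α) : DFA (Finset α) (Fin 3) where
  step s B :=
    if s = 0 then (if B = {a, b} then 0 else if B = ∅ then 1 else 2)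
    else if s = 1 then (if B = ∅ then 1 else 2)
    else 2
  start := 0
  accept := {s | s ≠ 2}

lemma dfa2_evalFrom_two (a b : α) (W : List (Finset α)) :
    (dfa2 a b).evalFrom 2 W = 2 := by
  induction W with
  | nil => rfl
  | cons B W ih => simpa [DFA.evalFrom, dfa2] using ih

lemma dfa2_evalFrom_one (a b : α) (W : List (Finset α)) :
    (dfa2 a b).evalFrom 1 W ≠ 2 ↔ ∀ B ∈ W, B = (∅ : Finset α) := by
  induction W with
  | nil => simp [DFA.evalFrom]
  | cons B W ih =>
    by_cases hB : B = (∅ : Finset α)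
    · subst hB
      have hstep : (dfa2 a b).step 1 ∅ = 1 := by simp [dfa2]
      rw [show (dfa2 a b).evalFrom 1 (∅ :: W) = (dfa2 a b).evalFrom ((dfa2 a b).step 1 ∅) W from rfl, hstep]
      rw [ih]
      constructor
      · intro h C hC
        rcases List.mem_cons.mp hC with rfl | hC
        · rfl
        · exact h C hC
      · intro h C hC; exact h C (List.mem_cons_of_mem _ hC)
    · have hstep : (dfa2 a b).step 1 B = 2 := by simp [dfa2, hB]
      rw [show (dfa2 a b).evalFrom 1 (B :: W) = (dfa2 a b).evalFrom ((dfa2 a b).step 1 B) W from rfl, hstep]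
      rw [dfa2_evalFrom_two]
      simp only [ne_eq, not_true_eq_false, false_iff, not_forall]
      push_neg
      exact ⟨B, List.mem_cons_self, Finset.nonempty_iff_ne_empty.mpr hB⟩

lemma pair_ne_empty {a b : α} : ({a, b} : Finset α) ≠ ∅ := by
  intro h
  have : a ∈ ({a, b} : Finset α) := by simp
  rw [h] at this
  simp at this

lemma parse_rep {a b : α} (n m : ℕ) (B : Finset α) (W : List (Finset α))
    (h : B :: W = List.replicate n ({a, b} : Finset α) ++ List.replicate m (∅ : Finset α)) :
    (∃ n', n = n' + 1 ∧ B = {a, b} ∧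
        W = List.replicate n' ({a, b} : Finset α) ++ List.replicate m (∅ : Finset α)) ∨
    (n = 0 ∧ ∃ m', m = m' + 1 ∧ B = ∅ ∧ W = List.replicate m' (∅ : Finset α)) := by
  cases n with
  | zero =>
    right
    simp only [List.replicate, List.nil_append] at h
    cases m with
    | zero => simp at h
    | succ m =>
      rw [List.replicate_succ] at h
      injection h with h1 h2
      exact ⟨rfl, m, rfl, h1, h2⟩
  | succ n =>
    left
    rw [List.replicate_succ, List.cons_append] at h
    injection h with h1 h2
    exact ⟨n, rfl, h1, h2⟩

lemma dfa2_evalFrom_zero {a b : α} (hne : a ≠ b) (W : List (Finset α)) :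
    (dfa2 a b).evalFrom 0 W ≠ 2 ↔
      ∃ n m, W = List.replicate n ({a, b} : Finset α) ++ List.replicate m (∅ : Finset α) := by
  induction W with
  | nil =>
    constructor
    · intro _; exact ⟨0, 0, rfl⟩
    · intro _; simp [DFA.evalFrom]
  | cons B W ih =>
    by_cases hB : B = ({a, b} : Finset α)
    · subst hB
      have hstep : (dfa2 a b).step 0 {a, b} = 0 := by simp [dfa2]
      rw [show (dfa2 a b).evalFrom 0 ({a, b} :: W) =
        (dfa2 a b).evalFrom ((dfa2 a b).step 0 {a, b}) W from rfl, hstep, ih]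
      constructor
      · rintro ⟨n, m, rfl⟩
        exact ⟨n + 1, m, by rw [List.replicate_succ]; rfl⟩
      · rintro ⟨n, m, h⟩
        rcases parse_rep n m _ _ h with ⟨n', _, _, hW⟩ | ⟨_, m', _, hB, _⟩
        · exact ⟨n', m, hW⟩
        · exact absurd hB pair_ne_empty
    · by_cases hBe : B = (∅ : Finset α)
      · subst hBe
        have hstep : (dfa2 a b).step 0 ∅ = 1 := by simp [dfa2, hB]
        rw [show (dfa2 a b).evalFrom 0 (∅ :: W) =
          (dfa2 a b).evalFrom ((dfa2 a b).step 0 ∅) W from rfl, hstep, dfa2_evalFrom_one]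
        constructor
        · intro h
          refine ⟨0, W.length + 1, ?_⟩
          simp only [List.replicate_succ, List.nil_append]
          rw [List.eq_replicate_iff.mpr ⟨rfl, h⟩]
          simp
        · rintro ⟨n, m, h⟩
          rcases parse_rep n m _ _ h with ⟨n', _, hB, _⟩ | ⟨_, m', _, _, hW⟩
          · exact absurd hB.symm pair_ne_empty
          · intro C hC
            rw [hW] at hC
            exact List.eq_of_mem_replicate hC
      · have hstep : (dfa2 a b).step 0 B = 2 := by simp [dfa2, hB, hBe]
        rw [show (dfa2 a b).evalFrom 0 (B :: W) =
          (dfa2 a b).evalFrom ((dfa2 a b).step 0 B) W from rfl, hstep, dfa2_evalFrom_two]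
        simp only [ne_eq, not_true_eq_false, false_iff]
        rintro ⟨n, m, h⟩
        rcases parse_rep n m _ _ h with ⟨n', _, hBB, _⟩ | ⟨_, m', _, hBB, _⟩
        · exact hB hBB
        · exact hBe hBB
end Dfa2

section Part1
set_option linter.unusedSectionVars false
variable {α : Type*} [DecidableEq α] {σ : Type} (D : α → α → Prop)

def okCond (prev : Option (Finset α)) (A : Finset α) : Prop :=
  IndepSet D A ∧ ∀ P ∈ prev, ↑A ⊆ DepSet D P

def OKL : Option (Finset α) → List (Finset α) → Prop
  | _, [] => True
  | prev, A :: W => okCond D prev A ∧ OKL (some A) W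

def lastO : Option (Finset α) → List (Finset α) → Option (Finset α)
  | prev, [] => prev
  | _, A :: W => lastO (some A) W

open Classical in
noncomputable def dfa1 (M : DFA α σ) : DFA (Finset α) (Option (σ × Option (Finset α))) where
  step s A := match s with
    | none => none
    | some (q, prev) => if okCond D prev A then some (M.evalFrom q A.toList, some A) else none
  start := some (M.start, none)
  accept := {s | ∃ q prev, s = some (q, prev) ∧ q ∈ M.accept}

lemma dfa1_none (M : DFA α σ) (W : List (Finset α)) :
    (dfa1 D M).evalFrom none W = none := by
  induction W with
  | nil => rfl
  | cons A W ih => simpa [DFA.evalFrom, dfa1] using ih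

open Classical in
lemma dfa1_evalFrom (M : DFA α σ) :
    ∀ (W : List (Finset α)) (q : σ) (prev : Option (Finset α)),
      (dfa1 D M).evalFrom (some (q, prev)) W =
        if OKL D prev W then
          some (M.evalFrom q (W.flatMap Finset.toList), lastO prev W)
        else none := by
  intro W
  induction W with
  | nil =>
    intro q prev
    rw [if_pos (show OKL D prev [] from trivial)]
    rfl
  | cons A W ih =>
    intro q prev
    have hstep : (dfa1 D M).evalFrom (some (q, prev)) (A :: W) =
        (dfa1 D M).evalFrom ((dfa1 D M).step (some (q, prev)) A) W := rfl
    by_cases hok : okCond D prev A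
    · have : (dfa1 D M).step (some (q, prev)) A =
          some (M.evalFrom q A.toList, some A) := by
        simp only [dfa1, if_pos hok]
      rw [hstep, this, ih]
      by_cases h2 : OKL D (some A) W
      · rw [if_pos h2, if_pos (show OKL D prev (A :: W) from ⟨hok, h2⟩)]
        rw [List.flatMap_cons, ← DFA.evalFrom_of_append]
        rfl
      · rw [if_neg h2, if_neg (show ¬ OKL D prev (A :: W) from fun h => h2 h.2)]
    · have : (dfa1 D M).step (some (q, prev)) A = none := by
        simp only [dfa1, if_neg hok]
      rw [hstep, this, dfa1_none]
      rw [if_neg (show ¬ OKL D prev (A :: W) from fun h => hok h.1)]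

lemma okl_iff : ∀ (W : List (Finset α)) (prev : Option (Finset α)),
    OKL D prev W ↔ (∀ A ∈ W, IndepSet D A) ∧
      (∀ P ∈ prev, ∀ B ∈ W.head?, ↑B ⊆ DepSet D P) ∧
      W.Chain' (fun A B => ↑B ⊆ DepSet D A) := by
  intro W
  induction W with
  | nil => intro prev; simp [OKL, List.Chain']
  | cons A W ih =>
    intro prev
    rw [show OKL D prev (A :: W) = (okCond D prev A ∧ OKL D (some A) W) from rfl, ih]
    simp only [List.Chain', List.isChain_cons]
    constructor
    · rintro ⟨⟨hind, hprev⟩, hindW, hheadA, hchW⟩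
      refine ⟨?_, ?_, ?_, hchW⟩
      · intro B hB
        rcases List.mem_cons.mp hB with rfl | hB
        · exact hind
        · exact hindW B hB
      · intro P hP B hB
        simp at hB
        subst hB
        exact hprev P hP
      · intro y hy
        exact hheadA A (by simp) y hy
    · rintro ⟨hind, hprev, hhead, hchW⟩
      refine ⟨⟨hind A (by simp), ?_⟩, fun B hB => hind B (List.mem_cons_of_mem _ hB), ?_, hchW⟩
      · intro P hP
        exact hprev P hP A (by simp)
      · intro P hP B hB
        simp at hP
        subst hP
        exact hhead B hB

lemma dfa1_accepts [Fintype α] (M : DFA α σ) (W : List (Finset α)) :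
    W ∈ (dfa1 D M).accepts ↔
      ((∀ A ∈ W, IndepSet D A) ∧ W.Chain' (fun A B => ↑B ⊆ DepSet D A) ∧
        (W.flatMap Finset.toList) ∈ M.accepts) := by
  have : W ∈ (dfa1 D M).accepts ↔ (dfa1 D M).evalFrom (some (M.start, none)) W ∈
      (dfa1 D M).accept := Iff.rfl
  rw [this, dfa1_evalFrom]
  by_cases hok : OKL D none W
  · rw [if_pos hok]
    have hiff := (okl_iff D W none).mp hok
    constructor
    · rintro ⟨q, prev, heq, hq⟩
      injection heq with heq
      refine ⟨hiff.1, hiff.2.2, ?_⟩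
      have : q = M.evalFrom M.start (W.flatMap Finset.toList) := by
        have := congrArg Prod.fst heq
        simp at this
        exact this.symm
      rw [this] at hq
      exact hq
    · rintro ⟨_, _, hacc⟩
      exact ⟨_, _, rfl, hacc⟩
  · rw [if_neg hok]
    constructor
    · rintro ⟨q, prev, heq, _⟩
      exact absurd heq (by simp)
    · rintro ⟨hind, hch, _⟩
      exact absurd ((okl_iff D W none).mpr ⟨hind, by simp, hch⟩) hok
end Part1


/-- Every recognizable trace language is fnf-automatic; but for independent letters
`a, b` and `A = {a,b}`, the language `{[A]^n | n ∈ ℕ} = {[aⁿbⁿ] | n ∈ ℕ}` is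
fnf-automatic and not recognizable. -/
theorem stmt18 {α : Type*} [Fintype α] [DecidableEq α] (D : α → α → Prop)
    (hrefl : ∀ a, D a a) (hsymm : ∀ a b, D a b → D b a)
    (a b : α) (hab : Indep D a b) :
    (∀ L : Set (traceCon D).Quotient, RecognizableLang D L → FnfAutomaticLang D L) ∧
    FnfAutomaticLang D
      {x : (traceCon D).Quotient | ∃ n : ℕ, x = (traceOf D [({a, b} : Finset α)]) ^ n} ∧
    ¬ RecognizableLang D
      {x : (traceCon D).Quotient | ∃ n : ℕ, x = (traceOf D [({a, b} : Finset α)]) ^ n} := by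
  refine ⟨?_, ?_, ?_⟩
  · intro L hL
    obtain ⟨σ, fin, M, hM⟩ := hL
    refine ⟨Fin (Fintype.card (Option (σ × Option (Finset α)))), inferInstance,
      DFA.reindex (Fintype.equivFin _) (dfa1 D M), ?_⟩
    rw [DFA.accepts_reindex]
    ext W
    rw [dfa1_accepts]
    constructor
    · rintro ⟨h1, h2, h3⟩
      rw [hM] at h3
      exact ⟨h1, h2, h3⟩
    · rintro ⟨h1, h2, h3⟩
      rw [hM]
      exact ⟨h1, h2, h3⟩
  · refine ⟨Fin 3, inferInstance, dfa2 a b, ?_⟩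
    rw [LLang_L0_eq hrefl hsymm hab]
    ext W
    show (dfa2 a b).evalFrom 0 W ∈ (dfa2 a b).accept ↔ _
    show (dfa2 a b).evalFrom 0 W ≠ 2 ↔ _
    rw [dfa2_evalFrom_zero hab.1]
    rfl
  · exact not_recognizable_L0 hsymm hab
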